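/- M_P is the least infinite-valued model of P with respect to ⊑_∞: for every infinite-valued model N of P, M_P ⊑_∞ N. Consequently, M_P is also the least fixpoint of T_P with respect to ⊑_∞. -/

import Mathlib

/-!
The minimum model is built in stages. Stage `α` starts from an interpretation in which every atom
is either settled, with a value of order `< α` that `T_P` reproduces, or provisionally `F_α`.
Interpretations that agree on all values of order `< α` give the same values of order `< α` to
bodies and under `T_P`, so iterating `T_P` leaves the settled atoms alone and moves the others
monotonically from `F_α` to `T_α`; recording `T_α`, `F_α`, or `F_{α+1}` for the atoms still
undecided yields the input of stage `α + 1`, and at limits the stages glue together. An atom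
settles at only one order and there are countably many atoms, so some countable stage `δ`
settles nothing new; collapsing the undecided atoms to `0` then gives a fixpoint of `T_P`.

For minimality, compare `M_P` with a model `N` at the least order `α` where their level sets
differ. A `T_α` atom of `M_P` is derived in finitely many `T_P` steps from values that `N`
shares, so it is `T_α` in `N`. An `F_α` atom of `N` stays false throughout the iteration of
stage `min α δ`, so it is `F_α` in `M_P` (and `α ≥ δ` is impossible). Hence `M_P ⊏_α N`.
-/

open Ordinal Set

noncomputable section
attribute [local instance] Classical.propDecidable

namespace IVS

/-- Countable ordinals: ordinals below `ω₁`. -/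
abbrev Ord1 := {o : Ordinal.{0} // o < ω₁}

theorem zero_lt_omega1 : (0 : Ordinal) < ω₁ := omega_pos 1

theorem succ_lt_omega1 {o : Ordinal} (h : o < ω₁) : o + 1 < ω₁ := by
  have := (Cardinal.isSuccLimit_omega 1).succ_lt h
  rwa [Order.succ_eq_add_one] at this

/-- zero as a countable ordinal -/
def O0 : Ord1 := ⟨0, zero_lt_omega1⟩

/-- successor on countable ordinals -/
def Ord1.succ (a : Ord1) : Ord1 := ⟨a.1 + 1, succ_lt_omega1 a.2⟩

/-- The truth domain `V`: `F_α < ⋯ < 0 < ⋯ < T_α` realized as a lexicographic sum. -/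
abbrev TV := Ord1 ⊕ₗ (Unit ⊕ₗ Ord1ᵒᵈ)

/-- the false value `F_α` -/
def TV.F (a : Ord1) : TV := toLex (Sum.inl a)
/-- the middle value `0` -/
def TV.Z : TV := toLex (Sum.inr (toLex (Sum.inl ())))
/-- the true value `T_α` -/
def TV.T (a : Ord1) : TV := toLex (Sum.inr (toLex (Sum.inr (OrderDual.toDual a))))

/-- the order of a truth value (`⊤` codes `+∞`, the order of `0`) -/
def ordOf (v : TV) : WithTop Ordinal :=
  match ofLex v with
  | .inl a => (a.1 : Ordinal)
  | .inr b =>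
    match ofLex b with
    | .inl _ => ⊤
    | .inr a => ((OrderDual.ofDual a).1 : Ordinal)

/-- negation-as-failure: `¬F_α = T_{α+1}`, `¬T_α = F_{α+1}`, `¬0 = 0`. -/
def negv (v : TV) : TV :=
  match ofLex v with
  | .inl a => TV.T a.succ
  | .inr b =>
    match ofLex b with
    | .inl _ => TV.Z
    | .inr a => TV.F (OrderDual.ofDual a).succ

/-- Literals of a propositional normal program (atoms are natural numbers). -/
inductive Lit where
  | pos (n : ℕ)
  | neg (n : ℕ)
  | tt
  | ff

/-- A normal program clause: a head atom and a body which is a conjunction of literals. -/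
structure Clause where
  head : ℕ
  body : List Lit

/-- A (possibly infinite) propositional normal logic program. -/
abbrev Program := Set Clause

/-- Infinite-valued interpretations. -/
abbrev Interp := ℕ → TV

/-- the interpretation assigning `F₀` to every atom (denoted `∅` in the paper) -/
def botI : Interp := fun _ => TV.F O0

def evalLit (I : Interp) : Lit → TV
  | .pos n => I n
  | .neg n => negv (I n)
  | .tt => TV.T O0
  | .ff => TV.F O0

/-- value of a body (conjunction evaluated by `min`; empty conjunction is `T₀`) -/
def evalBody (I : Interp) (b : List Lit) : TV :=
  (b.map (evalLit I)).foldr min (TV.T O0)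

/-- least upper bound in `V` (well-defined by the lub-existence theorem) -/
def lub (S : Set TV) : TV := if h : ∃ v, IsLUB S v then h.choose else TV.Z

/-- the immediate consequence operator -/
def TP (P : Program) (I : Interp) : Interp :=
  fun p => lub {v | ∃ c ∈ P, c.head = p ∧ evalBody I c.body = v}

/-- `I` is an (infinite-valued) model of `P` -/
def isModel (P : Program) (I : Interp) : Prop :=
  ∀ c ∈ P, evalBody I c.body ≤ I c.head

/-- the level set `I ∥ v` -/
def level (I : Interp) (v : TV) : Set ℕ := {p | I p = v}

/-- `I =_α J` -/
def eqA (α : Ord1) (I J : Interp) : Prop :=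
  ∀ β ≤ α, level I (TV.T β) = level J (TV.T β) ∧ level I (TV.F β) = level J (TV.F β)

/-- `I ⊏_α J` -/
def sqltA (α : Ord1) (I J : Interp) : Prop :=
  (∀ β < α, eqA β I J) ∧
    ((level I (TV.T α) ⊂ level J (TV.T α) ∧ level J (TV.F α) ⊆ level I (TV.F α)) ∨
     (level I (TV.T α) ⊆ level J (TV.T α) ∧ level J (TV.F α) ⊂ level I (TV.F α)))

/-- `I ⊑_α J` -/
def sqleA (α : Ord1) (I J : Interp) : Prop := eqA α I J ∨ sqltA α I J

/-- `I ⊏_∞ J` -/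
def sqltInf (I J : Interp) : Prop := ∃ α : Ord1, sqltA α I J

/-- `I ⊑_∞ J` -/
def sqleInf (I J : Interp) : Prop := I = J ∨ sqltInf I J

/-- the sequence `T_P^n(I)` is an `α`-chain -/
def isChainA (P : Program) (α : Ord1) (I : Interp) : Prop :=
  ∀ n : ℕ, sqleA α ((TP P)^[n] I) ((TP P)^[n + 1] I)

/-- the interpretation `T_{P,α}^ω(I)` -/
def TPomega (P : Program) (α : Ord1) (I : Interp) : Interp := fun p =>
  if ordOf (I p) < (α.1 : WithTop Ordinal) then I p
  else if ∃ n : ℕ, (TP P)^[n] I p = TV.T α then TV.T α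
  else if ∀ n : ℕ, (TP P)^[n] I p = TV.F α then TV.F α
  else TV.F α.succ

/-- `⊔_{β<α} M_β` for a family defined below `α` -/
def sqcupI (α : Ord1) (f : ∀ β : Ordinal, β < α.1 → Interp) : Interp := fun p =>
  if h : ∃ β : Ordinal, ∃ hb : β < α.1, ordOf (f β hb p) = (β : WithTop Ordinal)
  then f h.choose h.choose_spec.choose p
  else TV.F α

/-- the approximations `M_α` to the minimum model (junk values for `α ≥ ω₁`) -/
def MA (P : Program) (o : Ordinal) : Interp :=
  Ordinal.limitRecOn o
    (TPomega P O0 botI)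
    (fun o' ih => if h : o' + 1 < ω₁ then TPomega P ⟨o' + 1, h⟩ ih else ih)
    (fun o' _ ih =>
      if h : o' < ω₁ then TPomega P ⟨o', h⟩ (sqcupI ⟨o', h⟩ ih) else botI)

/-- `M_α` for a countable ordinal `α` -/
def Mα (P : Program) (α : Ord1) : Interp := MA P α.1

/-- the defining property of the depth `δ` of a program -/
def isDepth (P : Program) (δ : Ord1) : Prop :=
  (level (Mα P δ) (TV.T δ) = ∅ ∧ level (Mα P δ) (TV.F δ) = ∅) ∧
    ∀ β : Ord1, β < δ →
      (level (Mα P β) (TV.T β) ≠ ∅ ∨ level (Mα P β) (TV.F β) ≠ ∅)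

/-- the depth of a program -/
def depth (P : Program) : Ord1 :=
  if h : ∃ δ : Ord1, isDepth P δ then h.choose else O0

/-- the minimum model `M_P` -/
def MP (P : Program) : Interp := fun p =>
  if ordOf (Mα P (depth P) p) < ((depth P).1 : WithTop Ordinal)
  then Mα P (depth P) p else TV.Z

/-- the set of all infinite-valued models of `P` -/
def models (P : Program) : Set Interp := {I | isModel P I}

/-- `M ♯ α`: the part of `M` consisting of values of order `α` -/
def sharp (I : Interp) (α : Ord1) : Set (ℕ × TV) :=
  {pv | I pv.1 = pv.2 ∧ ordOf pv.2 = (α.1 : WithTop Ordinal)}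

/-- `⨀^α S = ⋀^α S ∪ ⋁^α S` -/
def odot (α : Ord1) (S : Set Interp) : Set (ℕ × TV) :=
  {pv | (∃ p : ℕ, pv = (p, TV.T α) ∧ ∀ M ∈ S, M p = TV.T α) ∨
        (∃ p : ℕ, pv = (p, TV.F α) ∧ ∃ M ∈ S, M p = TV.F α)}

/-- the sets `S_α` of the model intersection construction (junk for `α ≥ ω₁`) -/
def SA (P : Program) (o : Ordinal) : Set Interp :=
  Ordinal.limitRecOn o
    {M ∈ models P | sharp M O0 = odot O0 (models P)}
    (fun o' ih =>
      if h : o' + 1 < ω₁ then {M ∈ ih | sharp M ⟨o' + 1, h⟩ = odot ⟨o' + 1, h⟩ ih} else ih)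
    (fun o' _ ih =>
      if h : o' < ω₁ then
        {M : Interp | M ∈ (⋂ (b : Ordinal) (hb : b < o'), ih b hb) ∧
          sharp M ⟨o', h⟩ = odot ⟨o', h⟩ (⋂ (b : Ordinal) (hb : b < o'), ih b hb)}
      else ∅)

lemma O0_le (a : Ord1) : O0 ≤ a := zero_le (a := a.1)

lemma Ord1.lt_succ (a : Ord1) : a < a.succ := Order.lt_succ a.1

lemma Ord1.lt_succ_iff {a b : Ord1} : a < b.succ ↔ a ≤ b :=
  show a.1 < b.1 + 1 ↔ a.1 ≤ b.1 from Order.lt_add_one_iff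

lemma Ord1.succ_le_iff {a b : Ord1} : a.succ ≤ b ↔ a < b :=
  show a.1 + 1 ≤ b.1 ↔ a.1 < b.1 from Order.add_one_le_iff

lemma TV.cases (v : TV) : (∃ a, v = TV.F a) ∨ v = TV.Z ∨ ∃ a, v = TV.T a := by
  rcases v with a | (u | a)
  · exact Or.inl ⟨a, rfl⟩
  · exact Or.inr (Or.inl rfl)
  · exact Or.inr (Or.inr ⟨a, rfl⟩)

@[simp] lemma F_le_F {a b : Ord1} : TV.F a ≤ TV.F b ↔ a ≤ b := Sum.Lex.inl_le_inl_iff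

@[simp] lemma F_lt_F {a b : Ord1} : TV.F a < TV.F b ↔ a < b := Sum.Lex.inl_lt_inl_iff

@[simp] lemma T_le_T {a b : Ord1} : TV.T a ≤ TV.T b ↔ b ≤ a :=
  Sum.Lex.inr_le_inr_iff.trans Sum.Lex.inr_le_inr_iff

@[simp] lemma T_lt_T {a b : Ord1} : TV.T a < TV.T b ↔ b < a :=
  Sum.Lex.inr_lt_inr_iff.trans Sum.Lex.inr_lt_inr_iff

@[simp] lemma F_lt_Z {a : Ord1} : TV.F a < TV.Z := Sum.Lex.inl_lt_inr _ _

@[simp] lemma Z_lt_T {a : Ord1} : TV.Z < TV.T a :=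
  Sum.Lex.inr_lt_inr_iff.2 (Sum.Lex.inl_lt_inr _ _)

@[simp] lemma F_lt_T {a b : Ord1} : TV.F a < TV.T b := Sum.Lex.inl_lt_inr _ _

@[simp] lemma F_le_Z {a : Ord1} : TV.F a ≤ TV.Z := F_lt_Z.le

@[simp] lemma Z_le_T {a : Ord1} : TV.Z ≤ TV.T a := Z_lt_T.le

@[simp] lemma F_le_T {a b : Ord1} : TV.F a ≤ TV.T b := F_lt_T.le

@[simp] lemma not_T_le_F {a b : Ord1} : ¬ TV.T a ≤ TV.F b := F_lt_T.not_ge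

@[simp] lemma not_Z_le_F {a : Ord1} : ¬ TV.Z ≤ TV.F a := F_lt_Z.not_ge

@[simp] lemma F_ne_T {a b : Ord1} : TV.F a ≠ TV.T b := F_lt_T.ne

@[simp] lemma Z_ne_T {a : Ord1} : TV.Z ≠ TV.T a := Z_lt_T.ne

@[simp] lemma T_ne_F {a b : Ord1} : TV.T a ≠ TV.F b := F_lt_T.ne'

@[simp] lemma T_ne_Z {a : Ord1} : TV.T a ≠ TV.Z := Z_lt_T.ne'

@[simp] lemma F_inj {a b : Ord1} : TV.F a = TV.F b ↔ a = b := by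
  simp only [le_antisymm_iff, F_le_F]

@[simp] lemma T_inj {a b : Ord1} : TV.T a = TV.T b ↔ a = b := by
  simp only [le_antisymm_iff, T_le_T, and_comm]

@[simp] lemma ordOf_F (a : Ord1) : ordOf (TV.F a) = (a.1 : WithTop Ordinal) := rfl

@[simp] lemma ordOf_T (a : Ord1) : ordOf (TV.T a) = (a.1 : WithTop Ordinal) := rfl

@[simp] lemma ordOf_Z : ordOf TV.Z = ⊤ := rfl

@[simp] lemma negv_F (a : Ord1) : negv (TV.F a) = TV.T a.succ := rfl

@[simp] lemma negv_T (a : Ord1) : negv (TV.T a) = TV.F a.succ := rfl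

@[simp] lemma negv_Z : negv TV.Z = TV.Z := rfl

lemma le_T_zero (v : TV) : v ≤ TV.T O0 := by
  rcases TV.cases v with ⟨a, rfl⟩ | rfl | ⟨a, rfl⟩ <;> simp [O0_le]

lemma F_zero_le (v : TV) : TV.F O0 ≤ v := by
  rcases TV.cases v with ⟨a, rfl⟩ | rfl | ⟨a, rfl⟩ <;> simp [O0_le]

lemma le_F_iff {v : TV} {a : Ord1} : v ≤ TV.F a ↔ ∃ b ≤ a, v = TV.F b := by
  constructor
  · rcases TV.cases v with ⟨b, rfl⟩ | rfl | ⟨b, rfl⟩ <;> simp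
  · rintro ⟨b, hb, rfl⟩
    exact F_le_F.2 hb

lemma T_le_iff {v : TV} {a : Ord1} : TV.T a ≤ v ↔ ∃ b ≤ a, v = TV.T b := by
  constructor
  · rcases TV.cases v with ⟨b, rfl⟩ | rfl | ⟨b, rfl⟩ <;> simp
  · rintro ⟨b, hb, rfl⟩
    exact T_le_T.2 hb

/-- The values settled before stage `α`: `F_β` and `T_β` with `β < α` (`0` has order `⊤`). -/
abbrev OrdLt (v : TV) (α : Ord1) : Prop := ordOf v < (α.1 : WithTop Ordinal)

@[simp] lemma ordLt_F {a b : Ord1} : OrdLt (TV.F a) b ↔ a < b := WithTop.coe_lt_coe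

@[simp] lemma ordLt_T {a b : Ord1} : OrdLt (TV.T a) b ↔ a < b := WithTop.coe_lt_coe

@[simp] lemma not_ordLt_Z {a : Ord1} : ¬ OrdLt TV.Z a := by simp [OrdLt]

lemma ordLt_iff {v : TV} {α : Ord1} : OrdLt v α ↔ ∃ β < α, v = TV.F β ∨ v = TV.T β := by
  constructor
  · rcases TV.cases v with ⟨b, rfl⟩ | rfl | ⟨b, rfl⟩
    · exact fun h => ⟨b, ordLt_F.1 h, Or.inl rfl⟩
    · exact fun h => (not_ordLt_Z h).elim
    · exact fun h => ⟨b, ordLt_T.1 h, Or.inr rfl⟩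
  · rintro ⟨β, hβ, rfl | rfl⟩ <;> simpa using hβ

lemma OrdLt.mono {v : TV} {α β : Ord1} (h : OrdLt v α) (hαβ : α ≤ β) : OrdLt v β :=
  h.trans_le (WithTop.coe_le_coe.2 hαβ)

lemma ordLt_succ_iff {v : TV} {α : Ord1} : OrdLt v α.succ ↔ ordOf v ≤ (α.1 : WithTop Ordinal) := by
  rcases TV.cases v with ⟨b, rfl⟩ | rfl | ⟨b, rfl⟩ <;> simp [Ord1.lt_succ_iff, Subtype.coe_le_coe]

lemma F_le_of_not_ordLt {v : TV} {α : Ord1} (h : ¬ OrdLt v α) : TV.F α ≤ v := by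
  rcases TV.cases v with ⟨b, rfl⟩ | rfl | ⟨b, rfl⟩ <;> simp_all

lemma eq_F_of_le_of_not_ordLt {v : TV} {α : Ord1} (h : v ≤ TV.F α) (h' : ¬ OrdLt v α) :
    v = TV.F α :=
  le_antisymm h (F_le_of_not_ordLt h')

lemma eq_T_of_le_of_not_ordLt {v : TV} {α : Ord1} (h : TV.T α ≤ v) (h' : ¬ OrdLt v α) :
    v = TV.T α := by
  obtain ⟨b, hb, rfl⟩ := T_le_iff.1 h
  rw [T_inj]
  exact le_antisymm hb (not_lt.1 (mt ordLt_T.2 h'))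

lemma ordLt_iff_lt_F_or_T_lt {v : TV} {α : Ord1} : OrdLt v α ↔ v < TV.F α ∨ TV.T α < v := by
  rcases TV.cases v with ⟨b, rfl⟩ | rfl | ⟨b, rfl⟩ <;> simp

lemma ordLt_of_le_F {v : TV} {α β : Ord1} (h : v ≤ TV.F β) (hβ : β < α) : OrdLt v α :=
  ordLt_iff_lt_F_or_T_lt.2 (Or.inl (h.trans_lt (F_lt_F.2 hβ)))

lemma ordLt_of_T_le {v : TV} {α β : Ord1} (h : TV.T β ≤ v) (hβ : β < α) : OrdLt v α :=
  ordLt_iff_lt_F_or_T_lt.2 (Or.inr ((T_lt_T.2 hβ).trans_le h))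

lemma ordLt_of_ordLt_negv {v : TV} {α : Ord1} (h : OrdLt (negv v) α) : OrdLt v α := by
  rcases TV.cases v with ⟨b, rfl⟩ | rfl | ⟨b, rfl⟩
  · exact ordLt_F.2 ((Ord1.lt_succ b).trans (ordLt_T.1 h))
  · exact h
  · exact ordLt_T.2 ((Ord1.lt_succ b).trans (ordLt_F.1 h))

lemma eq_F_or_eq_T_of_ordLt_succ {v : TV} {α : Ord1} (h : OrdLt v α.succ) (h' : ¬ OrdLt v α) :
    v = TV.F α ∨ v = TV.T α := by
  obtain ⟨β, hβ, hv | hv⟩ := ordLt_iff.1 h <;> subst hv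
  · exact Or.inl (F_inj.2 (le_antisymm (Ord1.lt_succ_iff.1 hβ) (not_lt.1 (mt ordLt_F.2 h'))))
  · exact Or.inr (T_inj.2 (le_antisymm (Ord1.lt_succ_iff.1 hβ) (not_lt.1 (mt ordLt_T.2 h'))))

lemma exists_ordOf_eq_of_ordLt_succ {v : TV} {γ : Ord1} (h : OrdLt v γ.succ) :
    ∃ σ ≤ γ, ordOf v = σ.1 := by
  obtain ⟨σ, hσ, hv | hv⟩ := ordLt_iff.1 h <;> exact ⟨σ, Ord1.lt_succ_iff.1 hσ, by simp [hv]⟩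

lemma exists_isLUB (S : Set TV) : ∃ v, IsLUB S v := by
  by_cases hT : ∃ a, TV.T a ∈ S
  · obtain ⟨m, hm, hmin⟩ := wellFounded_lt.has_min {a | TV.T a ∈ S} hT
    refine ⟨TV.T m, fun v hv => ?_, fun w hw => hw hm⟩
    rcases TV.cases v with ⟨b, rfl⟩ | rfl | ⟨b, rfl⟩
    · exact F_le_T
    · exact Z_le_T
    · exact T_le_T.2 (not_lt.1 (hmin b hv))
  by_cases hZ : TV.Z ∈ S
  · refine ⟨TV.Z, fun v hv => ?_, fun w hw => hw hZ⟩
    rcases TV.cases v with ⟨b, rfl⟩ | rfl | ⟨b, rfl⟩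
    · exact F_le_Z
    · exact le_rfl
    · exact (hT ⟨b, hv⟩).elim
  have hF : ∀ v ∈ S, ∃ a, v = TV.F a := by
    intro v hv
    rcases TV.cases v with h | rfl | ⟨b, rfl⟩
    · exact h
    · exact (hZ hv).elim
    · exact (hT ⟨b, hv⟩).elim
  -- `S` consists of values `F_a`: its lub is `F` of the least countable bound of the indices,
  -- or `0` when the indices are unbounded in `ω₁`
  set U := {c : Ord1 | ∀ a, TV.F a ∈ S → a ≤ c}
  by_cases hU : U.Nonempty
  · obtain ⟨u, hu, hmin⟩ := wellFounded_lt.has_min U hU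
    refine ⟨TV.F u, fun v hv => ?_, fun w hw => ?_⟩
    · obtain ⟨a, rfl⟩ := hF v hv
      exact F_le_F.2 (hu a hv)
    · rcases TV.cases w with ⟨c, rfl⟩ | rfl | ⟨c, rfl⟩
      · exact F_le_F.2 (not_lt.1 (hmin c fun a ha => F_le_F.1 (hw ha)))
      · exact F_le_Z
      · exact F_le_T
  · refine ⟨TV.Z, fun v hv => ?_, fun w hw => ?_⟩
    · obtain ⟨a, rfl⟩ := hF v hv
      exact F_le_Z
    · rcases TV.cases w with ⟨c, rfl⟩ | rfl | ⟨c, rfl⟩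
      · exact (hU ⟨c, fun a ha => F_le_F.1 (hw ha)⟩).elim
      · exact le_rfl
      · exact Z_le_T

lemma isLUB_lub (S : Set TV) : IsLUB S (lub S) := by
  rw [lub, dif_pos (exists_isLUB S)]
  exact (exists_isLUB S).choose_spec

lemma le_lub {S : Set TV} {v : TV} (h : v ∈ S) : v ≤ lub S := (isLUB_lub S).1 h

lemma lub_le {S : Set TV} {w : TV} (h : ∀ v ∈ S, v ≤ w) : lub S ≤ w := (isLUB_lub S).2 h

lemma lub_eq_of_isLUB {S : Set TV} {v : TV} (h : IsLUB S v) : lub S = v :=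
  (isLUB_lub S).unique h

lemma exists_T_le_of_T_le_lub {S : Set TV} {a : Ord1} (h : TV.T a ≤ lub S) :
    ∃ v ∈ S, TV.T a ≤ v := by
  by_contra! hS
  -- otherwise `T_{a+1}` would be an upper bound of `S`
  have hle : lub S ≤ TV.T a.succ := lub_le fun v hv => by
    rcases TV.cases v with ⟨b, rfl⟩ | rfl | ⟨b, rfl⟩
    · exact F_le_T
    · exact Z_le_T
    · exact T_le_T.2 (Ord1.succ_le_iff.2 (T_lt_T.1 (hS _ hv)))
  exact (Ord1.lt_succ a).not_ge (T_le_T.1 (h.trans hle))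

@[simp] lemma evalBody_cons {I : Interp} {l : Lit} {b : List Lit} :
    evalBody I (l :: b) = evalLit I l ⊓ evalBody I b := rfl

lemma evalBody_le_evalLit {I : Interp} {l : Lit} {b : List Lit} (hl : l ∈ b) :
    evalBody I b ≤ evalLit I l := by
  induction b with
  | nil => exact absurd hl List.not_mem_nil
  | cons l' b ih =>
    rw [evalBody_cons]
    rcases List.mem_cons.1 hl with rfl | hl
    · exact inf_le_left
    · exact inf_le_right.trans (ih hl)

lemma le_evalBody {I : Interp} {b : List Lit} {v : TV} (h : ∀ l ∈ b, v ≤ evalLit I l) :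
    v ≤ evalBody I b := by
  induction b with
  | nil => exact le_T_zero v
  | cons l b ih =>
    rw [evalBody_cons]
    exact le_inf (h l List.mem_cons_self) (ih fun l' hl' => h l' (List.mem_cons_of_mem _ hl'))

lemma lt_evalBody {I : Interp} {b : List Lit} {v : TV} (hv : v < TV.T O0)
    (h : ∀ l ∈ b, v < evalLit I l) : v < evalBody I b := by
  induction b with
  | nil => exact hv
  | cons l b ih =>
    rw [evalBody_cons]
    rcases le_total (evalLit I l) (evalBody I b) with hle | hle
    · rw [inf_eq_left.2 hle]
      exact h l List.mem_cons_self
    · rw [inf_eq_right.2 hle]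
      exact ih fun l' hl' => h l' (List.mem_cons_of_mem _ hl')

lemma exists_evalLit_le_of_evalBody_le {I : Interp} {b : List Lit} {v : TV}
    (h : evalBody I b ≤ v) (hv : v < TV.T O0) : ∃ l ∈ b, evalLit I l ≤ v := by
  by_contra! hb
  exact (lt_evalBody hv hb).not_ge h

lemma TP_apply (P : Program) (I : Interp) (p : ℕ) :
    TP P I p = lub ((fun c => evalBody I c.body) '' {c | c ∈ P ∧ c.head = p}) := by
  simp only [TP, Set.image, Set.mem_ofPred_eq, and_assoc]

lemma evalBody_le_TP {P : Program} {I : Interp} {c : Clause} (hc : c ∈ P) :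
    evalBody I c.body ≤ TP P I c.head :=
  le_lub ⟨c, hc, rfl, rfl⟩

lemma TP_le_of_forall {P : Program} {I : Interp} {p : ℕ} {w : TV}
    (h : ∀ c ∈ P, c.head = p → evalBody I c.body ≤ w) : TP P I p ≤ w :=
  lub_le <| by
    rintro v ⟨c, hc, hh, rfl⟩
    exact h c hc hh

lemma exists_clause_of_T_le_TP {P : Program} {I : Interp} {p : ℕ} {a : Ord1}
    (h : TV.T a ≤ TP P I p) : ∃ c ∈ P, c.head = p ∧ TV.T a ≤ evalBody I c.body := by
  obtain ⟨_, ⟨c, hc, hh, rfl⟩, hle⟩ := exists_T_le_of_T_le_lub h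
  exact ⟨c, hc, hh, hle⟩

lemma isModel_iff_TP_le {P : Program} {I : Interp} : isModel P I ↔ ∀ p, TP P I p ≤ I p :=
  ⟨fun h _ => TP_le_of_forall fun c hc hh => hh ▸ h c hc,
    fun h c hc => (evalBody_le_TP hc).trans (h c.head)⟩

lemma isModel_of_TP_eq {P : Program} {I : Interp} (h : TP P I = I) : isModel P I :=
  isModel_iff_TP_le.2 fun p => (congrFun h p).le

def TV.AgreeBelow (α : Ord1) (v w : TV) : Prop := OrdLt v α ∨ OrdLt w α → v = w

namespace TV.AgreeBelow

variable {α : Ord1} {x y z x' y' : TV}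

lemma symm (h : TV.AgreeBelow α x y) : TV.AgreeBelow α y x := fun hy => (h hy.symm).symm

lemma trans (h : TV.AgreeBelow α x y) (h' : TV.AgreeBelow α y z) : TV.AgreeBelow α x z := by
  rintro (hx | hz)
  · have hxy := h (Or.inl hx)
    exact hxy.trans (h' (Or.inl (hxy ▸ hx)))
  · have hyz := h' (Or.inr hz)
    exact (h (Or.inr (hyz ▸ hz))).trans hyz

lemma mono {β : Ord1} (h : TV.AgreeBelow α x y) (hβ : β ≤ α) : TV.AgreeBelow β x y :=
  fun hxy => h (hxy.imp (·.mono hβ) (·.mono hβ))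

lemma negv (h : TV.AgreeBelow α x y) : TV.AgreeBelow α (IVS.negv x) (IVS.negv y) :=
  fun hxy => congrArg IVS.negv (h (hxy.imp ordLt_of_ordLt_negv ordLt_of_ordLt_negv))

lemma le_of_le (h : TV.AgreeBelow α y y') (hxy : x ≤ y) (hx : OrdLt x α) : x ≤ y' := by
  by_cases hy : OrdLt y α
  · exact h (Or.inl hy) ▸ hxy
  by_cases hy' : OrdLt y' α
  · exact (h (Or.inr hy') ▸ hxy)
  -- `y` and `y'` lie in `[F_α, T_α]`, so `x ≤ y`, having order `< α`, lies below `F_α`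
  rw [ordLt_iff_lt_F_or_T_lt, not_or, not_lt, not_lt] at hy hy'
  rcases ordLt_iff_lt_F_or_T_lt.1 hx with hx | hx
  · exact hx.le.trans hy'.1
  · exact absurd (hx.trans_le (hxy.trans hy.2)) (lt_irrefl _)

lemma inf_eq_of_ordLt (hx : TV.AgreeBelow α x x') (hy : TV.AgreeBelow α y y')
    (h : OrdLt (x ⊓ y) α) : x ⊓ y = x' ⊓ y' := by
  rcases le_total x y with hxy | hxy
  · rw [inf_eq_left.2 hxy] at h ⊢
    rw [← hx (Or.inl h), inf_eq_left.2 (hy.le_of_le hxy h)]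
  · rw [inf_eq_right.2 hxy] at h ⊢
    rw [← hy (Or.inl h), inf_eq_right.2 (hx.le_of_le hxy h)]

lemma inf (hx : TV.AgreeBelow α x x') (hy : TV.AgreeBelow α y y') :
    TV.AgreeBelow α (x ⊓ y) (x' ⊓ y') := by
  rintro (h | h)
  · exact inf_eq_of_ordLt hx hy h
  · exact (inf_eq_of_ordLt hx.symm hy.symm h).symm

lemma lub_image_eq_of_ordLt {ι : Type*} {s : Set ι} {f g : ι → TV}
    (h : ∀ i ∈ s, TV.AgreeBelow α (f i) (g i)) (hlt : OrdLt (lub (f '' s)) α) :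
    lub (f '' s) = lub (g '' s) := by
  obtain ⟨β, hβ, hF | hT⟩ := ordLt_iff.1 hlt
  · -- every value is `≤ F_β`, so it has order `< α` and is shared by `f` and `g`
    have hfg : Set.EqOn f g s := fun i hi =>
      h i hi (Or.inl (ordLt_of_le_F (hF ▸ le_lub (Set.mem_image_of_mem f hi)) hβ))
    rw [Set.image_congr hfg]
  · obtain ⟨_, ⟨i, hi, rfl⟩, hle⟩ := exists_T_le_of_T_le_lub hT.ge
    have hfi : f i = TV.T β := le_antisymm (hT ▸ le_lub (Set.mem_image_of_mem f hi)) hle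
    have hgi : g i = TV.T β := (h i hi (Or.inl (hfi ▸ ordLt_T.2 hβ))).symm.trans hfi
    rw [hT, eq_comm]
    refine lub_eq_of_isLUB ⟨?_, fun w hw => hgi ▸ hw (Set.mem_image_of_mem g hi)⟩
    rintro _ ⟨j, hj, rfl⟩
    by_contra! hlt'
    have hfj := h j hj (Or.inr (ordLt_of_T_le hlt'.le hβ))
    exact (hT ▸ le_lub (Set.mem_image_of_mem f hj)).not_gt (hfj ▸ hlt')

lemma lub_image {ι : Type*} {s : Set ι} {f g : ι → TV}
    (h : ∀ i ∈ s, TV.AgreeBelow α (f i) (g i)) :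
    TV.AgreeBelow α (lub (f '' s)) (lub (g '' s)) := by
  rintro (hlt | hlt)
  · exact lub_image_eq_of_ordLt h hlt
  · exact (lub_image_eq_of_ordLt (fun i hi => (h i hi).symm) hlt).symm

end TV.AgreeBelow

def AgreeBelow (α : Ord1) (I J : Interp) : Prop := ∀ p, TV.AgreeBelow α (I p) (J p)

namespace AgreeBelow

variable {α β : Ord1} {I J K : Interp}

lemma refl (α : Ord1) (I : Interp) : AgreeBelow α I I := fun _ _ => rfl

lemma symm (h : AgreeBelow α I J) : AgreeBelow α J I := fun p => (h p).symm

lemma trans (h : AgreeBelow α I J) (h' : AgreeBelow α J K) : AgreeBelow α I K :=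
  fun p => (h p).trans (h' p)

lemma mono (h : AgreeBelow α I J) (hβ : β ≤ α) : AgreeBelow β I J := fun p => (h p).mono hβ

lemma eq_of_ordLt (h : AgreeBelow α I J) {p : ℕ} (hp : OrdLt (I p) α) : J p = I p :=
  (h p (Or.inl hp)).symm

lemma not_ordLt (h : AgreeBelow α I J) {p : ℕ} (hp : ¬ OrdLt (I p) α) : ¬ OrdLt (J p) α :=
  fun hJ => hp (h p (Or.inr hJ) ▸ hJ)

lemma evalLit (h : AgreeBelow α I J) (l : Lit) : TV.AgreeBelow α (evalLit I l) (evalLit J l) := by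
  cases l with
  | pos q => exact h q
  | neg q => exact (h q).negv
  | tt => exact fun _ => rfl
  | ff => exact fun _ => rfl

lemma evalBody (h : AgreeBelow α I J) (b : List Lit) :
    TV.AgreeBelow α (evalBody I b) (evalBody J b) := by
  induction b with
  | nil => exact fun _ => rfl
  | cons l b ih => exact (h.evalLit l).inf ih

lemma TP {P : Program} (h : AgreeBelow α I J) : AgreeBelow α (TP P I) (TP P J) := by
  intro p
  rw [TP_apply, TP_apply]
  exact TV.AgreeBelow.lub_image fun c _ => h.evalBody c.body

end AgreeBelow

lemma agreeBelow_zero (I J : Interp) : AgreeBelow O0 I J := by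
  intro p hp
  exfalso
  rcases hp with hp | hp <;> obtain ⟨β, hβ, -⟩ := ordLt_iff.1 hp <;> exact not_lt.2 (O0_le β) hβ

lemma exists_lt_ordLt_succ {v : TV} {α : Ord1} (h : OrdLt v α) : ∃ β < α, OrdLt v β.succ := by
  obtain ⟨β, hβ, hv | hv⟩ := ordLt_iff.1 h <;> exact ⟨β, hβ, by simp [hv, Ord1.lt_succ]⟩

lemma agreeBelow_of_forall_succ {α : Ord1} {I J : Interp}
    (h : ∀ β < α, AgreeBelow β.succ I J) : AgreeBelow α I J := by
  rintro p (hp | hp)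
  · obtain ⟨β, hβ, hv⟩ := exists_lt_ordLt_succ hp
    exact h β hβ p (Or.inl hv)
  · obtain ⟨β, hβ, hv⟩ := exists_lt_ordLt_succ hp
    exact h β hβ p (Or.inr hv)

lemma agreeBelow_iff_level_eq {α : Ord1} {I J : Interp} :
    AgreeBelow α I J ↔
      ∀ β < α, level I (TV.T β) = level J (TV.T β) ∧ level I (TV.F β) = level J (TV.F β) := by
  constructor
  · intro h β hβ
    refine ⟨Set.ext fun p => ⟨fun hp => ?_, fun hp => ?_⟩,
      Set.ext fun p => ⟨fun hp => ?_, fun hp => ?_⟩⟩ <;>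
      simp only [level, Set.mem_ofPred_eq] at hp ⊢ <;> rw [← hp]
    · exact (h p (Or.inl (by simp [hp, hβ]))).symm
    · exact h p (Or.inr (by simp [hp, hβ]))
    · exact (h p (Or.inl (by simp [hp, hβ]))).symm
    · exact h p (Or.inr (by simp [hp, hβ]))
  · intro h p hp
    rcases hp with hp | hp <;> obtain ⟨β, hβ, hv | hv⟩ := ordLt_iff.1 hp
    · exact hv.trans (Set.ext_iff.1 (h β hβ).2 p |>.1 hv).symm
    · exact hv.trans (Set.ext_iff.1 (h β hβ).1 p |>.1 hv).symm
    · exact (Set.ext_iff.1 (h β hβ).2 p |>.2 hv).trans hv.symm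
    · exact (Set.ext_iff.1 (h β hβ).1 p |>.2 hv).trans hv.symm

lemma eq_of_forall_agreeBelow {I J : Interp} (h : ∀ α, AgreeBelow α I J) : I = J := by
  funext p
  rcases TV.cases (I p) with ⟨a, ha⟩ | hI | ⟨a, ha⟩
  · exact h a.succ p (Or.inl (by simp [ha, Ord1.lt_succ]))
  · rcases TV.cases (J p) with ⟨a, ha⟩ | hJ | ⟨a, ha⟩
    · exact h a.succ p (Or.inr (by simp [ha, Ord1.lt_succ]))
    · exact hI.trans hJ.symm
    · exact h a.succ p (Or.inr (by simp [ha, Ord1.lt_succ]))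
  · exact h a.succ p (Or.inl (by simp [ha, Ord1.lt_succ]))

section Propagation

variable {α δ : Ord1} {I J N : Interp}

lemma T_le_evalLit_of_agreeBelow (h : AgreeBelow α I J) {l : Lit}
    (hpos : ∀ q, l = Lit.pos q → I q = TV.T α → TV.T α ≤ J q)
    (hl : TV.T α ≤ evalLit I l) : TV.T α ≤ evalLit J l := by
  obtain ⟨σ, hσ, hv⟩ := T_le_iff.1 hl
  rcases hσ.lt_or_eq with hlt | rfl
  · rw [← h.evalLit l (Or.inl (by simp [hv, hlt])), hv]
    exact T_le_T.2 hσ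
  cases l with
  | pos q => exact hpos q rfl hv
  | neg q =>
    change negv (I q) = _ at hv
    change _ ≤ negv (J q)
    rcases TV.cases (I q) with ⟨c, hc⟩ | hc | ⟨c, hc⟩ <;> rw [hc] at hv <;> simp at hv
    rw [h.eq_of_ordLt (by simp [hc, ← hv, Ord1.lt_succ]), hc, negv_F, hv]
  | tt => exact le_T_zero _
  | ff => exact absurd hv F_ne_T

/-- The hypothesis `hgap` says that `N` has no values of order in `[δ, α)`. -/
lemma evalLit_le_F_of_agreeBelow (hδα : δ ≤ α) (h : AgreeBelow δ N I)
    (hgap : ∀ q, OrdLt (N q) α → OrdLt (N q) δ) {l : Lit}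
    (hpos : ∀ q, l = Lit.pos q → N q = TV.F α → I q ≤ TV.F δ)
    (hl : evalLit N l ≤ TV.F α) : evalLit I l ≤ TV.F δ := by
  cases l with
  | pos q =>
    change N q ≤ _ at hl
    change I q ≤ _
    obtain ⟨γ, hγ, hv⟩ := le_F_iff.1 hl
    rcases hγ.lt_or_eq with hlt | rfl
    · have hγδ : OrdLt (N q) δ := hgap q (by simp [hv, hlt])
      rw [h.eq_of_ordLt hγδ, hv]
      rw [hv, ordLt_F] at hγδ
      exact F_le_F.2 hγδ.le
    · exact hpos q rfl hv
  | neg q =>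
    change negv (N q) ≤ _ at hl
    change negv (I q) ≤ _
    rcases TV.cases (N q) with ⟨c, hc⟩ | hc | ⟨c, hc⟩ <;> rw [hc] at hl <;> simp at hl
    have hcδ : OrdLt (N q) δ :=
      hgap q (by simpa [hc] using (Ord1.lt_succ c).trans_le hl)
    rw [h.eq_of_ordLt hcδ, hc, negv_T]
    rw [hc, ordLt_T] at hcδ
    exact F_le_F.2 (Ord1.succ_le_iff.2 hcδ)
  | tt => exact absurd hl not_T_le_F
  | ff => exact F_zero_le _

lemma T_le_evalBody_of_agreeBelow (h : AgreeBelow α I J) {b : List Lit}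
    (hpos : ∀ q, Lit.pos q ∈ b → I q = TV.T α → TV.T α ≤ J q)
    (hb : TV.T α ≤ evalBody I b) : TV.T α ≤ evalBody J b :=
  le_evalBody fun _ hl => T_le_evalLit_of_agreeBelow h (fun q hq => hpos q (hq ▸ hl))
    (hb.trans (evalBody_le_evalLit hl))

lemma evalBody_le_F_of_agreeBelow (hδα : δ ≤ α) (h : AgreeBelow δ N I)
    (hgap : ∀ q, OrdLt (N q) α → OrdLt (N q) δ) {b : List Lit}
    (hpos : ∀ q, Lit.pos q ∈ b → N q = TV.F α → I q ≤ TV.F δ)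
    (hb : evalBody N b ≤ TV.F α) : evalBody I b ≤ TV.F δ := by
  obtain ⟨l, hl, hle⟩ := exists_evalLit_le_of_evalBody_le hb F_lt_T
  exact (evalBody_le_evalLit hl).trans
    (evalLit_le_F_of_agreeBelow hδα h hgap (fun q hq => hpos q (hq ▸ hl)) hle)

lemma T_le_TP_of_agreeBelow {P : Program} (h : AgreeBelow α I J)
    (hpos : ∀ q, I q = TV.T α → TV.T α ≤ J q) {p : ℕ} (hp : TV.T α ≤ TP P I p) :
    TV.T α ≤ TP P J p := by
  obtain ⟨c, hc, rfl, hb⟩ := exists_clause_of_T_le_TP hp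
  exact (T_le_evalBody_of_agreeBelow h (fun q _ => hpos q) hb).trans (evalBody_le_TP hc)

lemma TP_le_F_of_agreeBelow {P : Program} (hδα : δ ≤ α) (h : AgreeBelow δ N I)
    (hgap : ∀ q, OrdLt (N q) α → OrdLt (N q) δ) (hpos : ∀ q, N q = TV.F α → I q ≤ TV.F δ)
    {p : ℕ} (hp : TP P N p ≤ TV.F α) : TP P I p ≤ TV.F δ := by
  refine TP_le_of_forall ?_
  rintro c hc rfl
  exact evalBody_le_F_of_agreeBelow hδα h hgap (fun q _ => hpos q) ((evalBody_le_TP hc).trans hp)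

end Propagation

/-- The interpretations from which stage `α` starts: every atom is either settled, with a value
of order `< α` that `T_P` reproduces, or provisionally `F_α`. -/
structure IsStageInput (P : Program) (α : Ord1) (I : Interp) : Prop where
  shape : ∀ p, OrdLt (I p) α ∨ I p = TV.F α
  agreeBelow_TP : AgreeBelow α I (TP P I)

namespace IsStageInput

variable {P : Program} {α : Ord1} {I J : Interp}

lemma eq_F_of_agreeBelow (hI : IsStageInput P α I) (h : AgreeBelow α I J) {p : ℕ}
    (hp : ¬ OrdLt (J p) α) : I p = TV.F α :=
  (hI.shape p).resolve_left fun hs => hp (h.eq_of_ordLt hs ▸ hs)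

lemma not_ordLt_of_agreeBelow (h : AgreeBelow α I J) {p : ℕ} (hp : I p = TV.F α) :
    ¬ OrdLt (J p) α :=
  h.not_ordLt (by simp [hp])

lemma agreeBelow_iterate (hI : IsStageInput P α I) (n : ℕ) : AgreeBelow α I ((TP P)^[n] I) := by
  induction n with
  | zero => exact AgreeBelow.refl α I
  | succ n ih =>
    rw [Function.iterate_succ_apply']
    exact hI.agreeBelow_TP.trans ih.TP

lemma iterate_succ_eq_T (hI : IsStageInput P α I) :
    ∀ n p, (TP P)^[n] I p = TV.T α → (TP P)^[n + 1] I p = TV.T α := by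
  intro n
  induction n with
  | zero =>
    intro p hp
    rw [Function.iterate_zero_apply] at hp
    exact absurd (hI.shape p) (by simp [hp])
  | succ n ih =>
    intro p hp
    have hu : I p = TV.F α := hI.eq_F_of_agreeBelow (hI.agreeBelow_iterate (n + 1)) (by simp [hp])
    have hle : TV.T α ≤ (TP P)^[n + 2] I p := by
      rw [Function.iterate_succ_apply']
      refine T_le_TP_of_agreeBelow
        ((hI.agreeBelow_iterate n).symm.trans (hI.agreeBelow_iterate (n + 1)))
        (fun q hq => (ih q hq).ge) ?_
      rw [← Function.iterate_succ_apply' (TP P) n, hp]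
    exact eq_T_of_le_of_not_ordLt hle (not_ordLt_of_agreeBelow (hI.agreeBelow_iterate _) hu)

lemma iterate_eq_F_of_succ (hI : IsStageInput P α I) :
    ∀ n p, (TP P)^[n + 1] I p = TV.F α → (TP P)^[n] I p = TV.F α := by
  intro n
  induction n with
  | zero =>
    intro p hp
    exact hI.eq_F_of_agreeBelow (hI.agreeBelow_iterate (0 + 1)) (by rw [hp]; simp)
  | succ n ih =>
    intro p hp
    have hu : I p = TV.F α := hI.eq_F_of_agreeBelow (hI.agreeBelow_iterate (n + 2)) (by simp [hp])
    have hle : (TP P)^[n + 1] I p ≤ TV.F α := by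
      rw [Function.iterate_succ_apply']
      refine TP_le_F_of_agreeBelow le_rfl
        ((hI.agreeBelow_iterate (n + 1)).symm.trans (hI.agreeBelow_iterate n))
        (fun _ => id) (fun q hq => (ih q hq).le) ?_
      rw [← Function.iterate_succ_apply' (TP P) (n + 1), hp]
    exact eq_F_of_le_of_not_ordLt hle (not_ordLt_of_agreeBelow (hI.agreeBelow_iterate _) hu)

lemma monotone_level_T (hI : IsStageInput P α I) :
    Monotone fun n => level ((TP P)^[n] I) (TV.T α) :=
  monotone_nat_of_le_succ fun n p hp => hI.iterate_succ_eq_T n p hp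

lemma antitone_level_F (hI : IsStageInput P α I) :
    Antitone fun n => level ((TP P)^[n] I) (TV.F α) :=
  antitone_nat_of_succ_le fun n p hp => hI.iterate_eq_F_of_succ n p hp

end IsStageInput

section TPomega

variable {P : Program} {α : Ord1} {I : Interp} {p : ℕ}

lemma TPomega_of_ordLt (h : OrdLt (I p) α) : TPomega P α I p = I p := by
  rw [TPomega, if_pos h]

lemma TPomega_eq_T_iff (h : ¬ OrdLt (I p) α) :
    TPomega P α I p = TV.T α ↔ ∃ n, (TP P)^[n] I p = TV.T α := by
  rw [TPomega, if_neg h]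
  split_ifs with h1 <;> simp [h1]

lemma TPomega_eq_F_iff : TPomega P α I p = TV.F α ↔ ∀ n, (TP P)^[n] I p = TV.F α := by
  by_cases h : OrdLt (I p) α
  · rw [TPomega_of_ordLt h]
    refine iff_of_false (fun hp => ?_) fun hall => ?_
    · simp [hp] at h
    · simp [show I p = TV.F α from hall 0] at h
  · rw [TPomega, if_neg h]
    split_ifs with h1 h2
    · obtain ⟨n, hn⟩ := h1
      exact iff_of_false F_ne_T.symm fun hall => F_ne_T ((hall n).symm.trans hn)
    · exact iff_of_true rfl h2
    · exact iff_of_false (fun h' => (Ord1.lt_succ α).ne' (F_inj.1 h')) h2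

lemma TPomega_eq_of_not_ordLt (h : ¬ OrdLt (I p) α) :
    TPomega P α I p = TV.T α ∨ TPomega P α I p = TV.F α ∨ TPomega P α I p = TV.F α.succ := by
  rw [TPomega, if_neg h]
  split_ifs <;> simp

lemma agreeBelow_TPomega : AgreeBelow α I (TPomega P α I) := by
  intro p hp
  by_cases h : OrdLt (I p) α
  · exact (TPomega_of_ordLt h).symm
  · refine absurd (hp.resolve_left h) ?_
    rcases TPomega_eq_of_not_ordLt (P := P) h with h' | h' | h' <;> simp [h', (Ord1.lt_succ α).le]

lemma exists_iterate_eq_T_of_TPomega_eq_T (hp : TPomega P α I p = TV.T α) :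
    ∃ n, (TP P)^[n] I p = TV.T α := by
  by_cases h : OrdLt (I p) α
  · rw [TPomega_of_ordLt h] at hp
    simp [hp] at h
  · exact (TPomega_eq_T_iff h).1 hp

end TPomega

lemma eventually_forall_pos_mem {R : ℕ → ℕ → Prop} (h : ∀ q, ∀ᶠ n in Filter.atTop, R n q)
    (b : List Lit) : ∀ᶠ n in Filter.atTop, ∀ q, Lit.pos q ∈ b → R n q := by
  have hfin : {q | Lit.pos q ∈ b}.Finite :=
    (List.finite_toSet b).preimage fun _ _ _ _ h => Lit.pos.inj h
  exact (Filter.eventually_all_finite hfin).2 fun q _ => h q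

namespace IsStageInput

variable {P : Program} {α : Ord1} {I : Interp} {p : ℕ}

lemma agreeBelow_iterate_TPomega (hI : IsStageInput P α I) (n : ℕ) :
    AgreeBelow α ((TP P)^[n] I) (TPomega P α I) :=
  (hI.agreeBelow_iterate n).symm.trans agreeBelow_TPomega

lemma agreeBelow_TP_TPomega (hI : IsStageInput P α I) :
    AgreeBelow α I (TP P (TPomega P α I)) :=
  hI.agreeBelow_TP.trans agreeBelow_TPomega.TP

lemma eventually_TPomega_eq_T_imp (hI : IsStageInput P α I) (q : ℕ) :
    ∀ᶠ n in Filter.atTop, TPomega P α I q = TV.T α → (TP P)^[n] I q = TV.T α := by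
  by_cases hq : TPomega P α I q = TV.T α
  · obtain ⟨n, hn⟩ := exists_iterate_eq_T_of_TPomega_eq_T hq
    filter_upwards [Filter.eventually_ge_atTop n] with m hm _ using hI.monotone_level_T hm hn
  · exact .of_forall fun _ h => absurd h hq

lemma eventually_iterate_eq_F_imp (hI : IsStageInput P α I) (q : ℕ) :
    ∀ᶠ n in Filter.atTop, (TP P)^[n] I q = TV.F α → TPomega P α I q = TV.F α := by
  by_cases hq : TPomega P α I q = TV.F α
  · exact .of_forall fun _ _ => hq
  · obtain ⟨n, hn⟩ := not_forall.1 (mt TPomega_eq_F_iff.2 hq)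
    filter_upwards [Filter.eventually_ge_atTop n] with m hm h
      using absurd (hI.antitone_level_F hm h) hn

lemma TP_TPomega_eq_T (hI : IsStageInput P α I) (hp : TPomega P α I p = TV.T α) :
    TP P (TPomega P α I) p = TV.T α := by
  obtain ⟨n, hn⟩ := exists_iterate_eq_T_of_TPomega_eq_T hp
  have hu : I p = TV.F α := hI.eq_F_of_agreeBelow (hI.agreeBelow_iterate n) (by simp [hn])
  have hle : TV.T α ≤ TP P (TPomega P α I) p := by
    refine T_le_TP_of_agreeBelow (hI.agreeBelow_iterate_TPomega n) (fun q hq => ?_) ?_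
    · have huq : I q = TV.F α := hI.eq_F_of_agreeBelow (hI.agreeBelow_iterate n) (by simp [hq])
      exact ((TPomega_eq_T_iff (by simp [huq])).2 ⟨n, hq⟩).ge
    · rw [← Function.iterate_succ_apply' (TP P) n, hI.iterate_succ_eq_T n p hn]
  exact eq_T_of_le_of_not_ordLt hle (not_ordLt_of_agreeBelow hI.agreeBelow_TP_TPomega hu)

lemma TP_TPomega_eq_F (hI : IsStageInput P α I) (hp : TPomega P α I p = TV.F α) :
    TP P (TPomega P α I) p = TV.F α := by
  have hall := TPomega_eq_F_iff.1 hp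
  have hle : TP P (TPomega P α I) p ≤ TV.F α := by
    refine TP_le_of_forall ?_
    rintro c hc rfl
    obtain ⟨n, hn⟩ := (eventually_forall_pos_mem hI.eventually_iterate_eq_F_imp c.body).exists
    refine evalBody_le_F_of_agreeBelow le_rfl (hI.agreeBelow_iterate_TPomega n) (fun _ => id)
      (fun q hq hF => (hn q hq hF).le) ?_
    calc evalBody ((TP P)^[n] I) c.body ≤ TP P ((TP P)^[n] I) c.head := evalBody_le_TP hc
      _ = TV.F α := by rw [← Function.iterate_succ_apply' (TP P) n, hall (n + 1)]
  exact eq_F_of_le_of_not_ordLt hle (not_ordLt_of_agreeBelow hI.agreeBelow_TP_TPomega (hall 0))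

lemma TPomega_eq_T_of_TP_eq_T (hI : IsStageInput P α I) (hp : TP P (TPomega P α I) p = TV.T α) :
    TPomega P α I p = TV.T α := by
  have hu : I p = TV.F α := hI.eq_F_of_agreeBelow hI.agreeBelow_TP_TPomega (by simp [hp])
  obtain ⟨c, hc, rfl, hb⟩ := exists_clause_of_T_le_TP hp.ge
  obtain ⟨n, hn⟩ := (eventually_forall_pos_mem hI.eventually_TPomega_eq_T_imp c.body).exists
  have hle : TV.T α ≤ (TP P)^[n + 1] I c.head := by
    rw [Function.iterate_succ_apply']
    exact (T_le_evalBody_of_agreeBelow (hI.agreeBelow_iterate_TPomega n).symm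
      (fun q hq hT => (hn q hq hT).ge) hb).trans (evalBody_le_TP hc)
  refine (TPomega_eq_T_iff (by simp [hu])).2 ⟨n + 1, ?_⟩
  exact eq_T_of_le_of_not_ordLt hle (not_ordLt_of_agreeBelow (hI.agreeBelow_iterate _) hu)

lemma TPomega_eq_F_of_TP_eq_F (hI : IsStageInput P α I) (hp : TP P (TPomega P α I) p = TV.F α) :
    TPomega P α I p = TV.F α := by
  have hu : I p = TV.F α := hI.eq_F_of_agreeBelow hI.agreeBelow_TP_TPomega (by simp [hp])
  refine TPomega_eq_F_iff.2 fun n => ?_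
  cases n with
  | zero => exact hu
  | succ n =>
    have hle : (TP P)^[n + 1] I p ≤ TV.F α := by
      rw [Function.iterate_succ_apply']
      exact TP_le_F_of_agreeBelow le_rfl (hI.agreeBelow_iterate_TPomega n).symm (fun _ => id)
        (fun q hq => (TPomega_eq_F_iff.1 hq n).le) hp.le
    exact eq_F_of_le_of_not_ordLt hle (not_ordLt_of_agreeBelow (hI.agreeBelow_iterate _) hu)

end IsStageInput

theorem isStageInput_TPomega {P : Program} {α : Ord1} {I : Interp} (hI : IsStageInput P α I) :
    IsStageInput P α.succ (TPomega P α I) := by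
  refine ⟨fun p => ?_, fun p hp => ?_⟩
  · by_cases h : OrdLt (I p) α
    · exact Or.inl (by rw [TPomega_of_ordLt h]; exact h.mono (Ord1.lt_succ α).le)
    · rcases TPomega_eq_of_not_ordLt (P := P) h with h' | h' | h' <;> simp [h', Ord1.lt_succ]
  by_cases h : OrdLt (I p) α
  · rw [TPomega_of_ordLt h]
    exact (hI.agreeBelow_TP_TPomega.eq_of_ordLt h).symm
  have hM : ¬ OrdLt (TPomega P α I p) α := agreeBelow_TPomega.not_ordLt h
  have hTM : ¬ OrdLt (TP P (TPomega P α I) p) α := hI.agreeBelow_TP_TPomega.not_ordLt h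
  rcases hp with hp | hp
  · rcases eq_F_or_eq_T_of_ordLt_succ hp hM with hv | hv
    · rw [hv, hI.TP_TPomega_eq_F hv]
    · rw [hv, hI.TP_TPomega_eq_T hv]
  · rcases eq_F_or_eq_T_of_ordLt_succ hp hTM with hv | hv
    · rw [hv, hI.TPomega_eq_F_of_TP_eq_F hv]
    · rw [hv, hI.TPomega_eq_T_of_TP_eq_T hv]

def stageInput (P : Program) (o : Ordinal.{0}) : Interp :=
  Ordinal.limitRecOn o botI (fun o' _ => MA P o')
    (fun o' _ _ => if h : o' < ω₁ then sqcupI ⟨o', h⟩ (fun β _ => MA P β) else botI)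

section Construction

variable {P : Program}

lemma stageInput_zero : stageInput P 0 = botI := Ordinal.limitRecOn_zero ..

lemma stageInput_add_one (o : Ordinal.{0}) : stageInput P (o + 1) = MA P o :=
  Ordinal.limitRecOn_add_one ..

lemma stageInput_limit {o : Ordinal.{0}} (hl : Order.IsSuccLimit o) (h : o < ω₁) :
    stageInput P o = sqcupI ⟨o, h⟩ (fun β _ => MA P β) := by
  rw [stageInput, Ordinal.limitRecOn_limit _ _ _ _ hl, dif_pos h]

lemma Mα_eq_TPomega (α : Ord1) : Mα P α = TPomega P α (stageInput P α.1) := by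
  obtain ⟨o, h⟩ := α
  rcases Ordinal.zero_or_succ_or_isSuccLimit o with rfl | ⟨o, rfl⟩ | hl
  · rw [stageInput_zero, Mα, MA, Ordinal.limitRecOn_zero]
    rfl
  · simp only [Order.succ_eq_add_one] at h ⊢
    rw [Mα, MA, Ordinal.limitRecOn_add_one, dif_pos h, stageInput_add_one]
    rfl
  · rw [Mα, MA, Ordinal.limitRecOn_limit _ _ _ _ hl, dif_pos h, stageInput_limit hl h]
    rfl

lemma agreeBelow_stageInput_Mα (α : Ord1) : AgreeBelow α (stageInput P α.1) (Mα P α) := by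
  rw [Mα_eq_TPomega]
  exact agreeBelow_TPomega

structure StageInvariant (P : Program) (α : Ord1) : Prop where
  isStageInput : IsStageInput P α (stageInput P α.1)
  agreeBelow : ∀ γ < α, AgreeBelow γ.succ (Mα P γ) (stageInput P α.1)

namespace StageInvariant

variable {α γ : Ord1}

lemma isStageInput_Mα (hα : StageInvariant P α) : IsStageInput P α.succ (Mα P α) := by
  rw [Mα_eq_TPomega]
  exact isStageInput_TPomega hα.isStageInput

lemma agreeBelow_Mα (hα : StageInvariant P α) (hγ : γ < α) :
    AgreeBelow γ.succ (Mα P γ) (Mα P α) :=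
  (hα.agreeBelow γ hγ).trans ((agreeBelow_stageInput_Mα α).mono (Ord1.succ_le_iff.2 hγ))

lemma Mα_eq_of_le (hα : StageInvariant P α) (hγ : γ ≤ α) {p : ℕ}
    (hp : ordOf (Mα P γ p) ≤ γ.1 ∨ ordOf (Mα P α p) ≤ γ.1) : Mα P γ p = Mα P α p := by
  rcases hγ.lt_or_eq with hγ | rfl
  · exact hα.agreeBelow_Mα hγ p (hp.imp ordLt_succ_iff.2 ordLt_succ_iff.2)
  · rfl

lemma ordOf_ne_of_lt (hα : StageInvariant P α) (hγ : γ < α) {p : ℕ}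
    (hp : ordOf (Mα P γ p) = γ.1) : ordOf (Mα P α p) ≠ α.1 := by
  rw [← hα.Mα_eq_of_le hγ.le (Or.inl hp.le), hp]
  exact fun h => hγ.ne (Subtype.ext (WithTop.coe_inj.1 h))

lemma zero : StageInvariant P O0 where
  isStageInput := by
    change IsStageInput P O0 (stageInput P 0)
    rw [stageInput_zero]
    exact ⟨fun _ => Or.inr rfl, agreeBelow_zero _ _⟩
  agreeBelow γ hγ := absurd hγ (not_lt.2 (O0_le γ))

lemma succ (hα : StageInvariant P α) : StageInvariant P α.succ where
  isStageInput := by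
    change IsStageInput P α.succ (stageInput P (α.1 + 1))
    rw [stageInput_add_one]
    exact hα.isStageInput_Mα
  agreeBelow γ hγ := by
    change AgreeBelow γ.succ (Mα P γ) (stageInput P (α.1 + 1))
    rw [stageInput_add_one]
    rcases (Ord1.lt_succ_iff.1 hγ).lt_or_eq with hγ | rfl
    · exact hα.agreeBelow_Mα hγ
    · exact AgreeBelow.refl _ _

end StageInvariant

section Limit

variable {α : Ord1}

lemma stageInput_limit_apply_of_ordOf_eq (hl : Order.IsSuccLimit α.1)
    (IH : ∀ β < α, StageInvariant P β) {β : Ord1} (hβ : β < α) {p : ℕ}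
    (hp : ordOf (Mα P β p) = β.1) : stageInput P α.1 p = Mα P β p := by
  have hex : ∃ o, ∃ ho : o < α.1, ordOf (MA P o p) = o := ⟨β.1, hβ, hp⟩
  rw [stageInput_limit hl α.2, sqcupI, dif_pos hex]
  let β' : Ord1 := ⟨hex.choose, hex.choose_spec.choose.trans α.2⟩
  have hβ' : β' < α := hex.choose_spec.choose
  have hp' : ordOf (Mα P β' p) = β'.1 := hex.choose_spec.choose_spec
  -- an atom gets a value of order `β` in `M_β` for at most one `β`
  have : β' = β := by
    rcases lt_trichotomy β' β with h | h | h
    · exact absurd hp ((IH β hβ).ordOf_ne_of_lt h hp')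
    · exact h
    · exact absurd hp' ((IH β' hβ').ordOf_ne_of_lt h hp)
  change Mα P β' p = _
  rw [this]

lemma stageInput_limit_apply_of_not_exists (hl : Order.IsSuccLimit α.1) {p : ℕ}
    (hp : ¬ ∃ β < α, ordOf (Mα P β p) = β.1) : stageInput P α.1 p = TV.F α := by
  rw [stageInput_limit hl α.2, sqcupI, dif_neg]
  rintro ⟨o, ho, hord⟩
  exact hp ⟨⟨o, ho.trans α.2⟩, ho, hord⟩

lemma agreeBelow_Mα_stageInput_limit (hl : Order.IsSuccLimit α.1)
    (IH : ∀ β < α, StageInvariant P β) {γ : Ord1} (hγ : γ < α) :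
    AgreeBelow γ.succ (Mα P γ) (stageInput P α.1) := by
  rintro p (hp | hp)
  · obtain ⟨σ, hσγ, hord⟩ := exists_ordOf_eq_of_ordLt_succ hp
    have hσ := (IH γ hγ).Mα_eq_of_le hσγ (Or.inr hord.le)
    rw [stageInput_limit_apply_of_ordOf_eq hl IH (hσγ.trans_lt hγ) (hσ ▸ hord), hσ]
  · by_cases hex : ∃ β < α, ordOf (Mα P β p) = β.1
    · obtain ⟨β, hβ, hord⟩ := hex
      rw [stageInput_limit_apply_of_ordOf_eq hl IH hβ hord] at hp ⊢
      have hβγ : β ≤ γ := by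
        have := ordLt_succ_iff.1 hp
        rw [hord] at this
        exact_mod_cast this
      exact ((IH γ hγ).Mα_eq_of_le hβγ (Or.inl hord.le)).symm
    · rw [stageInput_limit_apply_of_not_exists hl hex] at hp
      exact absurd (ordLt_F.1 hp) (not_lt.2 (Ord1.succ_le_iff.2 hγ))

lemma isStageInput_stageInput_limit (hl : Order.IsSuccLimit α.1)
    (IH : ∀ β < α, StageInvariant P β) : IsStageInput P α (stageInput P α.1) where
  shape p := by
    by_cases hex : ∃ β < α, ordOf (Mα P β p) = β.1
    · obtain ⟨β, hβ, hord⟩ := hex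
      left
      rw [stageInput_limit_apply_of_ordOf_eq hl IH hβ hord, OrdLt, hord]
      exact_mod_cast hβ
    · exact Or.inr (stageInput_limit_apply_of_not_exists hl hex)
  agreeBelow_TP := agreeBelow_of_forall_succ fun β hβ =>
    (agreeBelow_Mα_stageInput_limit hl IH hβ).symm.trans
      ((IH β hβ).isStageInput_Mα.agreeBelow_TP.trans (agreeBelow_Mα_stageInput_limit hl IH hβ).TP)

lemma stageInvariant_limit (hl : Order.IsSuccLimit α.1) (IH : ∀ β < α, StageInvariant P β) :
    StageInvariant P α :=
  ⟨isStageInput_stageInput_limit hl IH, fun _ hγ => agreeBelow_Mα_stageInput_limit hl IH hγ⟩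

end Limit

theorem stageInvariant (α : Ord1) : StageInvariant P α := by
  induction α using WellFoundedLT.induction with
  | _ α IH =>
  rcases Ordinal.zero_or_succ_or_isSuccLimit α.1 with h | ⟨o, ho⟩ | hl
  · obtain rfl : α = O0 := Subtype.ext h
    exact StageInvariant.zero
  · have hoα : o < α.1 := ho ▸ Order.lt_succ o
    have hα : α = Ord1.succ ⟨o, hoα.trans α.2⟩ :=
      Subtype.ext (ho.symm.trans (Order.succ_eq_add_one o))
    rw [hα]
    exact (IH ⟨o, hoα.trans α.2⟩ hoα).succ
  · exact stageInvariant_limit hl IH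

lemma isStageInput_stageInput (α : Ord1) : IsStageInput P α (stageInput P α.1) :=
  (stageInvariant α).isStageInput

lemma isStageInput_Mα (α : Ord1) : IsStageInput P α.succ (Mα P α) :=
  (stageInvariant α).isStageInput_Mα

lemma agreeBelow_Mα_of_le {γ α : Ord1} (hγα : γ ≤ α) : AgreeBelow γ.succ (Mα P γ) (Mα P α) := by
  rcases hγα.lt_or_eq with hγα | rfl
  · exact (stageInvariant α).agreeBelow_Mα hγα
  · exact AgreeBelow.refl _ _

end Construction

lemma uncountable_Ord1 : Uncountable Ord1 := by
  rw [← Cardinal.aleph0_lt_mk_iff]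
  have h := Cardinal.mk_Iio_ordinal (ω₁ : Ordinal.{0})
  rw [Ordinal.card_omega] at h
  change Cardinal.aleph0 < Cardinal.mk (Set.Iio (ω₁ : Ordinal.{0}))
  rw [h, ← Cardinal.lift_aleph0.{1, 0}, Cardinal.lift_lt]
  exact Cardinal.aleph0_lt_aleph_one

section Depth

variable (P : Program)

lemma eq_of_ordOf_Mα_eq {γ β : Ord1} {p : ℕ} (hγ : ordOf (Mα P γ p) = γ.1)
    (hβ : ordOf (Mα P β p) = β.1) : γ = β := by
  rcases lt_trichotomy γ β with h | h | h
  · exact absurd hβ ((stageInvariant β).ordOf_ne_of_lt h hγ)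
  · exact h
  · exact absurd hγ ((stageInvariant γ).ordOf_ne_of_lt h hβ)

/-- Each atom acquires a value of order `γ` in `M_γ` for at most one `γ`, and there are only
countably many atoms. -/
lemma exists_level_Mα_eq_empty :
    ∃ γ : Ord1, level (Mα P γ) (TV.T γ) = ∅ ∧ level (Mα P γ) (TV.F γ) = ∅ := by
  suffices ¬ ∀ γ : Ord1, ∃ p, ordOf (Mα P γ p) = γ.1 by
    obtain ⟨γ, hγ⟩ := not_forall.1 this
    refine ⟨γ, Set.eq_empty_of_forall_notMem fun p hp => hγ ⟨p, ?_⟩,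
      Set.eq_empty_of_forall_notMem fun p hp => hγ ⟨p, ?_⟩⟩ <;>
      simp [show Mα P γ p = _ from hp]
  intro h
  choose f hf using h
  have hf_inj : Function.Injective f := fun γ β e => eq_of_ordOf_Mα_eq P (hf γ) (e ▸ hf β)
  have := uncountable_Ord1
  exact not_countable hf_inj.countable

lemma exists_isDepth : ∃ δ, isDepth P δ := by
  obtain ⟨δ, hδ, hmin⟩ := wellFounded_lt.has_min _ (exists_level_Mα_eq_empty P)
  exact ⟨δ, hδ, fun β hβ => not_and_or.1 fun h => hmin β h hβ⟩

lemma isDepth_depth : isDepth P (depth P) := by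
  rw [depth, dif_pos (exists_isDepth P)]
  exact (exists_isDepth P).choose_spec

end Depth

section MinimumModel

variable {P : Program} {p : ℕ}

lemma Mα_depth_shape (p : ℕ) :
    OrdLt (Mα P (depth P) p) (depth P) ∨ Mα P (depth P) p = TV.F (depth P).succ := by
  refine (isStageInput_Mα (depth P)).shape p |>.imp_left fun h => ?_
  by_contra h'
  rcases eq_F_or_eq_T_of_ordLt_succ h h' with hv | hv
  · exact ((isDepth_depth P).1.2 ▸ hv : p ∈ (∅ : Set ℕ))
  · exact ((isDepth_depth P).1.1 ▸ hv : p ∈ (∅ : Set ℕ))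

lemma MP_of_ordLt (h : OrdLt (Mα P (depth P) p) (depth P)) : MP P p = Mα P (depth P) p :=
  if_pos h

lemma MP_of_not_ordLt (h : ¬ OrdLt (Mα P (depth P) p) (depth P)) : MP P p = TV.Z :=
  if_neg h

lemma MP_shape (p : ℕ) : OrdLt (MP P p) (depth P) ∨ MP P p = TV.Z := by
  by_cases h : OrdLt (Mα P (depth P) p) (depth P)
  · exact Or.inl (MP_of_ordLt h ▸ h)
  · exact Or.inr (MP_of_not_ordLt h)

lemma agreeBelow_Mα_depth_MP : AgreeBelow (depth P).succ (Mα P (depth P)) (MP P) := by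
  intro p hp
  by_cases h : OrdLt (Mα P (depth P) p) (depth P)
  · exact (MP_of_ordLt h).symm
  · rw [MP_of_not_ordLt h, (Mα_depth_shape p).resolve_left h] at hp ⊢
    simp at hp

lemma agreeBelow_Mα_MP {α : Ord1} (hα : α ≤ depth P) : AgreeBelow α.succ (Mα P α) (MP P) :=
  (agreeBelow_Mα_of_le hα).trans
    (agreeBelow_Mα_depth_MP.mono (Ord1.succ_le_iff.2 (Ord1.lt_succ_iff.2 hα)))

lemma agreeBelow_stageInput_MP {α : Ord1} (hα : α ≤ depth P) :
    AgreeBelow α (stageInput P α.1) (MP P) :=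
  (agreeBelow_stageInput_Mα α).trans ((agreeBelow_Mα_MP hα).mono (Ord1.lt_succ α).le)

end MinimumModel

/-- `v` has order at most `δ`, or is `0`. -/
def LowOrZero (δ : Ord1) (v : TV) : Prop := v ≤ TV.F δ ∨ v = TV.Z ∨ TV.T δ ≤ v

namespace LowOrZero

variable {δ : Ord1} {v w : TV}

lemma of_ordLt_or_eq_Z (h : OrdLt v δ ∨ v = TV.Z) : LowOrZero δ v := by
  rcases h with h | h
  · rcases ordLt_iff_lt_F_or_T_lt.1 h with h | h
    · exact Or.inl h.le
    · exact Or.inr (Or.inr h.le)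
  · exact Or.inr (Or.inl h)

lemma negv (h : OrdLt v δ ∨ v = TV.Z) : LowOrZero δ (negv v) := by
  rcases h with h | rfl
  · obtain ⟨β, hβ, rfl | rfl⟩ := ordLt_iff.1 h
    · exact Or.inr (Or.inr (T_le_T.2 (Ord1.succ_le_iff.2 hβ)))
    · exact Or.inl (F_le_F.2 (Ord1.succ_le_iff.2 hβ))
  · exact Or.inr (Or.inl rfl)

lemma inf (hv : LowOrZero δ v) (hw : LowOrZero δ w) : LowOrZero δ (v ⊓ w) := by
  rcases le_total v w with h | h
  · rwa [inf_eq_left.2 h]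
  · rwa [inf_eq_right.2 h]

lemma lub {S : Set TV} (h : ∀ v ∈ S, LowOrZero δ v) : LowOrZero δ (lub S) := by
  by_cases hT : ∃ v ∈ S, TV.T δ ≤ v
  · obtain ⟨v, hv, hle⟩ := hT
    exact Or.inr (Or.inr (hle.trans (le_lub hv)))
  push Not at hT
  have hS : ∀ v ∈ S, v ≤ TV.Z := fun v hv => by
    rcases h v hv with h' | h' | h'
    · exact h'.trans F_le_Z
    · exact h'.le
    · exact absurd h' (hT v hv).not_ge
  by_cases hZ : TV.Z ∈ S
  · exact Or.inr (Or.inl (lub_eq_of_isLUB ⟨hS, fun w hw => hw hZ⟩))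
  · refine Or.inl (lub_le fun v hv => ?_)
    rcases h v hv with h' | rfl | h'
    · exact h'
    · exact absurd hv hZ
    · exact absurd h' (hT v hv).not_ge

lemma eq_Z (h : LowOrZero δ v) (h' : ¬ OrdLt v δ.succ) : v = TV.Z := by
  rcases h with h | h | h
  · exact absurd (ordLt_of_le_F h (Ord1.lt_succ δ)) h'
  · exact h
  · exact absurd (ordLt_of_T_le h (Ord1.lt_succ δ)) h'

end LowOrZero

section Fixpoint

variable {P : Program}

lemma lowOrZero_evalLit_MP (l : Lit) : LowOrZero (depth P) (evalLit (MP P) l) := by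
  cases l with
  | pos q => exact .of_ordLt_or_eq_Z (MP_shape q)
  | neg q => exact .negv (MP_shape q)
  | tt => exact Or.inr (Or.inr (T_le_T.2 (O0_le _)))
  | ff => exact Or.inl (F_le_F.2 (O0_le _))

lemma lowOrZero_evalBody_MP (b : List Lit) : LowOrZero (depth P) (evalBody (MP P) b) := by
  induction b with
  | nil => exact Or.inr (Or.inr (T_le_T.2 (O0_le _)))
  | cons l b ih => exact (lowOrZero_evalLit_MP l).inf ih

lemma lowOrZero_TP_MP (p : ℕ) : LowOrZero (depth P) (TP P (MP P) p) := by
  rw [TP_apply]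
  exact .lub (by rintro _ ⟨c, -, rfl⟩; exact lowOrZero_evalBody_MP c.body)

theorem TP_MP (P : Program) : TP P (MP P) = MP P := by
  have hagr : AgreeBelow (depth P).succ (MP P) (TP P (MP P)) :=
    agreeBelow_Mα_depth_MP.symm.trans
      ((isStageInput_Mα (depth P)).agreeBelow_TP.trans agreeBelow_Mα_depth_MP.TP)
  funext p
  rcases MP_shape p with h | h
  · exact hagr.eq_of_ordLt (h.mono (Ord1.lt_succ _).le)
  · -- `T_P(M_P)` only takes values of order `≤ δ` or `0`, and at `p` none of order `≤ δ`
    rw [h]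
    exact (lowOrZero_TP_MP p).eq_Z (hagr.not_ordLt (by simp [h]))

end Fixpoint

lemma sqleInf_of_level_subset {I J : Interp}
    (H : ∀ α, AgreeBelow α I J →
      level I (TV.T α) ⊆ level J (TV.T α) ∧ level J (TV.F α) ⊆ level I (TV.F α)) :
    sqleInf I J := by
  by_cases hex : ∃ α : Ord1,
      ¬ (level I (TV.T α) = level J (TV.T α) ∧ level I (TV.F α) = level J (TV.F α))
  · obtain ⟨α, hα, hmin⟩ := wellFounded_lt.has_min _ hex
    have hagr : AgreeBelow α I J :=
      agreeBelow_iff_level_eq.2 fun β hβ => not_not.1 fun h => hmin β h hβ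
    obtain ⟨hT, hF⟩ := H α hagr
    refine Or.inr ⟨α, fun β hβ γ hγ => agreeBelow_iff_level_eq.1 hagr γ (hγ.trans_lt hβ), ?_⟩
    by_cases hTeq : level I (TV.T α) = level J (TV.T α)
    · exact Or.inr ⟨hTeq.le, hF.ssubset_of_ne fun h => hα ⟨hTeq, h.symm⟩⟩
    · exact Or.inl ⟨hT.ssubset_of_ne hTeq, hF⟩
  · simp only [not_exists, not_not] at hex
    exact Or.inl (eq_of_forall_agreeBelow fun _ => agreeBelow_iff_level_eq.2 fun β _ => hex β)

namespace IsStageInput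

variable {P : Program} {α δ : Ord1} {I N : Interp}

lemma T_le_of_iterate_eq_T (hI : IsStageInput P α I) (hN : isModel P N)
    (h : AgreeBelow α I N) : ∀ n q, (TP P)^[n] I q = TV.T α → TV.T α ≤ N q := by
  intro n
  induction n with
  | zero =>
    intro q hq
    rw [Function.iterate_zero_apply] at hq
    exact absurd (hI.shape q) (by simp [hq])
  | succ n ih =>
    intro q hq
    rw [Function.iterate_succ_apply'] at hq
    exact (T_le_TP_of_agreeBelow ((hI.agreeBelow_iterate n).symm.trans h)
      (fun q' hq' => ih q' hq') hq.ge).trans (isModel_iff_TP_le.1 hN q)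

lemma iterate_eq_F_of_model (hI : IsStageInput P δ I) (hδα : δ ≤ α) (hN : isModel P N)
    (h : AgreeBelow δ I N) (hgap : ∀ q, OrdLt (N q) α → OrdLt (N q) δ) :
    ∀ n q, N q = TV.F α → (TP P)^[n] I q = TV.F δ := by
  intro n
  induction n with
  | zero => exact fun q hq => hI.eq_F_of_agreeBelow h (by simp [hq, hδα])
  | succ n ih =>
    intro q hq
    have hu : I q = TV.F δ := hI.eq_F_of_agreeBelow h (by simp [hq, hδα])
    have hle : (TP P)^[n + 1] I q ≤ TV.F δ := by
      rw [Function.iterate_succ_apply']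
      exact TP_le_F_of_agreeBelow hδα (h.symm.trans (hI.agreeBelow_iterate n)) hgap
        (fun q' hq' => (ih q' hq').le) (hq ▸ isModel_iff_TP_le.1 hN q)
    exact eq_F_of_le_of_not_ordLt hle (not_ordLt_of_agreeBelow (hI.agreeBelow_iterate _) hu)

end IsStageInput

section Minimality

variable {P : Program} {N : Interp} {α : Ord1}

lemma MP_level_T_subset (hN : isModel P N) (h : AgreeBelow α (MP P) N) :
    level (MP P) (TV.T α) ⊆ level N (TV.T α) := by
  intro p (hp : MP P p = TV.T α)
  have hαδ : α < depth P := by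
    rcases MP_shape (P := P) p with hs | hZ
    · simpa [hp] using hs
    · simp [hp] at hZ
  have hMα : Mα P α p = TV.T α :=
    (agreeBelow_Mα_MP hαδ.le p (Or.inr (by simp [hp, Ord1.lt_succ]))).trans hp
  rw [Mα_eq_TPomega] at hMα
  obtain ⟨n, hn⟩ := exists_iterate_eq_T_of_TPomega_eq_T hMα
  have hle := (isStageInput_stageInput α).T_le_of_iterate_eq_T hN
    ((agreeBelow_stageInput_MP hαδ.le).trans h) n p hn
  exact eq_T_of_le_of_not_ordLt hle (h.not_ordLt (by simp [hp]))

lemma Mα_eq_F_of_model (hN : isModel P N) (h : AgreeBelow α (MP P) N) {s : Ord1}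
    (hs : s ≤ depth P) (hsα : s ≤ α) (hgap : ∀ q, OrdLt (N q) α → OrdLt (N q) s) {p : ℕ}
    (hp : N p = TV.F α) : Mα P s p = TV.F s := by
  rw [Mα_eq_TPomega]
  exact TPomega_eq_F_iff.2 fun n => (isStageInput_stageInput s).iterate_eq_F_of_model hsα hN
    ((agreeBelow_stageInput_MP hs).trans (h.mono hsα)) hgap n p hp

lemma level_F_subset_MP_level (hN : isModel P N) (h : AgreeBelow α (MP P) N) :
    level N (TV.F α) ⊆ level (MP P) (TV.F α) := by
  intro p (hp : N p = TV.F α)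
  by_cases hαδ : α < depth P
  · have hMα := Mα_eq_F_of_model hN h hαδ.le le_rfl (fun _ => id) hp
    exact ((agreeBelow_Mα_MP hαδ.le) p (Or.inl (by simp [hMα, Ord1.lt_succ]))).symm.trans hMα
  -- otherwise `p` would be `F_δ` in `M_δ`, which has no values of order `δ`
  have hgap : ∀ q, OrdLt (N q) α → OrdLt (N q) (depth P) := fun q hq => by
    have he := h q (Or.inr hq)
    rcases MP_shape (P := P) q with hs | hZ
    · rwa [← he]
    · rw [← he, hZ] at hq
      exact absurd hq not_ordLt_Z
  have hMδ := Mα_eq_F_of_model hN h le_rfl (not_lt.1 hαδ) hgap hp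
  exact absurd ((isDepth_depth P).1.2 ▸ hMδ : p ∈ (∅ : Set ℕ)) (Set.notMem_empty p)

theorem MP_least (hN : isModel P N) : sqleInf (MP P) N :=
  sqleInf_of_level_subset fun _ h => ⟨MP_level_T_subset hN h, level_F_subset_MP_level hN h⟩

end Minimality

/-- `M_P` is the `⊑_∞`-least model of `P`, and also the `⊑_∞`-least fixpoint of `T_P`. -/
theorem MP_least_model_and_least_fixpoint (P : Program) :
    isModel P (MP P) ∧ (∀ N : Interp, isModel P N → sqleInf (MP P) N) ∧
    TP P (MP P) = MP P ∧ (∀ I : Interp, TP P I = I → sqleInf (MP P) I) :=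
  ⟨isModel_of_TP_eq (TP_MP P), fun _ hN => MP_least hN, TP_MP P,
    fun _ hI => MP_least (isModel_of_TP_eq hI)⟩

end IVS
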